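/- Suppose k ≥ 2 and set K = U_2 ⊕ ⋯ ⊕ U_{k-1} ⊕ 𝓩(𝓗_n). For any g, g' ∈ K and any x ∈ U_1, inf{ d_A(g*s, g'*t) : s, t ∈ U_1 } = inf{ d_A(g*x, g'*t) : t ∈ U_1 } = d_A(g, g'); that is, the minimal distance between the left cosets g*U_1 and g'*U_1 is realized from every point of g*U_1 and equals d_A(g, g'). -/

import Mathlib

open scoped BigOperators RealInnerProductSpace ENNReal
open Module Filter

noncomputable section

/-- The underlying space of the `n`-th Heisenberg group/algebra: `ℝ^{2n+1}`
with a fixed inner product. -/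
abbrev HV (n : ℕ) : Type := EuclideanSpace ℝ (Fin (2 * n + 1))

/-- `br` is a Heisenberg Lie bracket on `ℝ^{2n+1}`: with respect to some basis
`b`, the only nontrivial bracket relations are `[b_{2s}, b_{2s+1}] = b_{2n}` (0-indexed). -/
def IsHeisenbergBracket (n : ℕ) (br : HV n →ₗ[ℝ] HV n →ₗ[ℝ] HV n) : Prop :=
  ∃ b : Basis (Fin (2 * n + 1)) ℝ (HV n),
    ∀ i j : Fin (2 * n + 1),
      br (b i) (b j) =
        (if (i : ℕ) % 2 = 0 ∧ (j : ℕ) = (i : ℕ) + 1 ∧ (i : ℕ) < 2 * n then (1 : ℝ)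
         else if (j : ℕ) % 2 = 0 ∧ (i : ℕ) = (j : ℕ) + 1 ∧ (j : ℕ) < 2 * n then (-1 : ℝ)
         else 0) • b ⟨2 * n, by omega⟩

/-- `A` is a derivation of the Lie algebra `(ℝ^{2n+1}, br)`. -/
def IsDerivation {n : ℕ} (br : HV n →ₗ[ℝ] HV n →ₗ[ℝ] HV n)
    (A : HV n →ₗ[ℝ] HV n) : Prop :=
  ∀ x y, A (br x y) = br (A x) y + br x (A y)

/-- The group product `x * y = x + y + (1/2)[x,y]` (BCH formula). -/
def hMul {n : ℕ} (br : HV n →ₗ[ℝ] HV n →ₗ[ℝ] HV n) (x y : HV n) : HV n :=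
  x + y + (2⁻¹ : ℝ) • br x y

/-- The left coset `g * S`. -/
def leftCoset {n : ℕ} (br : HV n →ₗ[ℝ] HV n →ₗ[ℝ] HV n) (g : HV n)
    (S : Set (HV n)) : Set (HV n) :=
  hMul br g '' S

/-- `‖x‖_A = Σ_i |x_i|^{1/α_i}`, where `x_i` is the component of `x` in the
eigenspace `U i` (computed as the orthogonal projection; the eigenspaces are
assumed mutually orthogonal with sum everything). -/
def normA {n k : ℕ} (α : Fin (k + 1) → ℝ) (U : Fin (k + 1) → Submodule ℝ (HV n))
    (x : HV n) : ℝ :=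
  ∑ i, ‖((U i).orthogonalProjectionOnto x : HV n)‖ ^ (α i)⁻¹

/-- The parabolic visual quasimetric `d_A(p,q) = ‖(-p) * q‖_A`. -/
def qd {n k : ℕ} (br : HV n →ₗ[ℝ] HV n →ₗ[ℝ] HV n) (α : Fin (k + 1) → ℝ)
    (U : Fin (k + 1) → Submodule ℝ (HV n)) (p q : HV n) : ℝ :=
  normA α U (hMul br (-p) q)

/-- `η` is a homeomorphism of `[0,∞)` onto itself. -/
def IsHomeoOfNonneg (η : ℝ → ℝ) : Prop :=
  η 0 = 0 ∧ StrictMonoOn η (Set.Ici 0) ∧ ContinuousOn η (Set.Ici 0) ∧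
    ∀ s : ℝ, 0 ≤ s → ∃ t : ℝ, 0 ≤ t ∧ η t = s

/-- `F` is an `η`-quasisymmetry from `(X, d1)` to `(X, d2)`. -/
def IsQS {X : Type*} (d1 d2 : X → X → ℝ) (η : ℝ → ℝ) (F : X → X) : Prop :=
  Function.Bijective F ∧
    ∀ x y z : X, x ≠ y → y ≠ z → x ≠ z →
      d2 (F x) (F y) / d2 (F x) (F z) ≤ η (d1 x y / d1 x z)

/-- `L_F(x,r) = sup { d2(F x, F x') : d1(x,x') ≤ r }`. -/
def LFr {X : Type*} (d1 d2 : X → X → ℝ) (F : X → X) (x : X) (r : ℝ) : ℝ≥0∞ :=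
  ⨆ (x' : X) (_ : d1 x x' ≤ r), ENNReal.ofReal (d2 (F x) (F x'))

/-- `l_F(x,r) = inf { d2(F x, F x') : d1(x,x') ≥ r }`. -/
def lFr {X : Type*} (d1 d2 : X → X → ℝ) (F : X → X) (x : X) (r : ℝ) : ℝ≥0∞ :=
  ⨅ (x' : X) (_ : r ≤ d1 x x'), ENNReal.ofReal (d2 (F x) (F x'))

/-- `L_F(x) = limsup_{r→0⁺} L_F(x,r)/r`. -/
def LF {X : Type*} (d1 d2 : X → X → ℝ) (F : X → X) (x : X) : ℝ≥0∞ :=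
  Filter.limsup (fun r : ℝ => LFr d1 d2 F x r / ENNReal.ofReal r) (nhdsWithin 0 (Set.Ioi 0))

/-- `l_F(x) = liminf_{r→0⁺} l_F(x,r)/r`. -/
def lF {X : Type*} (d1 d2 : X → X → ℝ) (F : X → X) (x : X) : ℝ≥0∞ :=
  Filter.liminf (fun r : ℝ => lFr d1 d2 F x r / ENNReal.ofReal r) (nhdsWithin 0 (Set.Ioi 0))


/-!
The centre `ℝ e` of the Heisenberg algebra is `A`-invariant, so `e` is an eigenvector, say for
`λ`, and a nonzero bracket of eigenvectors for `a` and `b` forces `a + b = λ`. An eigenvector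
outside the centre brackets nontrivially with some eigenvector, so every eigenvalue other than
`λ` has a positive partner summing to `λ`; hence `λ = α_{k+1}` is the top eigenvalue. Comparing
with the partner of `α_k` shows that `U_1, …, U_{k-1}` bracket trivially with `U_1`, so `K`
commutes with `U_1` and is orthogonal to it, and
`d_A(g * s, g' * t) = d_A(g, g') + |t - s| ^ (1 / α_1)` for `s, t ∈ U_1`.
-/

def heisCoeff (n : ℕ) (i j : Fin (2 * n + 1)) : ℝ :=
  if (i : ℕ) % 2 = 0 ∧ (j : ℕ) = (i : ℕ) + 1 ∧ (i : ℕ) < 2 * n then 1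
  else if (j : ℕ) % 2 = 0 ∧ (i : ℕ) = (j : ℕ) + 1 ∧ (j : ℕ) < 2 * n then -1
  else 0

theorem heisCoeff_swap (n : ℕ) (i j : Fin (2 * n + 1)) :
    heisCoeff n j i = -heisCoeff n i j := by
  unfold heisCoeff
  split_ifs <;> first | (exfalso; omega) | norm_num

theorem heisCoeff_last_left (n : ℕ) (j : Fin (2 * n + 1)) :
    heisCoeff n (Fin.last (2 * n)) j = 0 := by
  have := j.isLt
  simp only [heisCoeff, Fin.val_last]
  split_ifs <;> first | (exfalso; omega) | rfl

theorem exists_heisCoeff_dual {n : ℕ} {i : Fin (2 * n + 1)} (hi : i ≠ Fin.last (2 * n)) :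
    ∃ j, heisCoeff n i j ≠ 0 ∧ ∀ i' ≠ i, heisCoeff n i' j = 0 := by
  have hi' : (i : ℕ) < 2 * n := by
    have := i.isLt; have : (i : ℕ) ≠ 2 * n := fun h => hi (Fin.ext h); omega
  rcases Nat.mod_two_eq_zero_or_one (i : ℕ) with hpar | hpar
  · refine ⟨⟨i + 1, by omega⟩, by simp [heisCoeff, hpar, hi'], fun i' hne => ?_⟩
    have : (i' : ℕ) ≠ i := fun h => hne (Fin.ext h)
    simp only [heisCoeff]
    split_ifs <;> first | (exfalso; omega) | rfl
  · refine ⟨⟨i - 1, by omega⟩, ?_, fun i' hne => ?_⟩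
    · simp only [heisCoeff]
      split_ifs <;> first | (exfalso; omega) | norm_num
    · have : (i' : ℕ) ≠ i := fun h => hne (Fin.ext h)
      simp only [heisCoeff]
      split_ifs <;> first | (exfalso; omega) | rfl

theorem isHeisenbergBracket_iff {n : ℕ} {br : HV n →ₗ[ℝ] HV n →ₗ[ℝ] HV n} :
    IsHeisenbergBracket n br ↔ ∃ b : Basis (Fin (2 * n + 1)) ℝ (HV n),
      ∀ i j, br (b i) (b j) = heisCoeff n i j • b (Fin.last (2 * n)) :=
  Iff.rfl

namespace IsHeisenbergBracket

variable {n : ℕ} {br : HV n →ₗ[ℝ] HV n →ₗ[ℝ] HV n}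

theorem antisymm (hbr : IsHeisenbergBracket n br) (x y : HV n) : br x y = -br y x := by
  obtain ⟨b, hb⟩ := isHeisenbergBracket_iff.mp hbr
  have h : br = -br.flip := LinearMap.ext_basis b b fun i j => by
    simp only [LinearMap.neg_apply, LinearMap.flip_apply, hb, heisCoeff_swap n j i, neg_smul]
  simpa using LinearMap.congr_fun₂ h x y

theorem apply_basis_right {b : Basis (Fin (2 * n + 1)) ℝ (HV n)}
    (hb : ∀ i j, br (b i) (b j) = heisCoeff n i j • b (Fin.last (2 * n))) (z : HV n) (j) :
    br z (b j) = (∑ i, b.repr z i * heisCoeff n i j) • b (Fin.last (2 * n)) := by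
  conv_lhs => rw [← b.sum_repr z]
  simp only [map_sum, map_smul, LinearMap.sum_apply, LinearMap.smul_apply, hb, smul_smul,
    Finset.sum_smul]

theorem exists_center (hbr : IsHeisenbergBracket n br) :
    ∃ e : HV n, e ≠ 0 ∧ br e = 0 ∧ (∀ x y, br x y ∈ ℝ ∙ e) ∧ LinearMap.ker br ≤ ℝ ∙ e := by
  obtain ⟨b, hb⟩ := isHeisenbergBracket_iff.mp hbr
  set e := b (Fin.last (2 * n))
  refine ⟨e, b.ne_zero _, b.ext fun j => ?_, fun x y => ?_, fun z hz => ?_⟩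
  · rw [hb, heisCoeff_last_left, zero_smul, LinearMap.zero_apply]
  · have hq : br.compr₂ (ℝ ∙ e).mkQ = 0 := LinearMap.ext_basis b b fun i j => by
      simp [hb, (Submodule.Quotient.mk_eq_zero _).mpr (Submodule.mem_span_singleton_self e)]
    simpa [← Submodule.Quotient.mk_eq_zero] using LinearMap.congr_fun₂ hq x y
  · have hrepr : ∀ i ≠ Fin.last (2 * n), b.repr z i = 0 := fun i hi => by
      obtain ⟨j, hij, hj⟩ := exists_heisCoeff_dual hi
      have h := apply_basis_right hb z j
      rw [LinearMap.mem_ker.mp hz, LinearMap.zero_apply,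
        Finset.sum_eq_single i (fun i' _ hi' => by rw [hj i' hi', mul_zero]) (by simp)] at h
      exact (mul_eq_zero.mp ((smul_eq_zero.mp h.symm).resolve_right (b.ne_zero _))).resolve_right
        hij
    rw [← b.sum_repr z, Finset.sum_eq_single (Fin.last (2 * n))
      (fun i _ hi => by rw [hrepr i hi, zero_smul]) (by simp)]
    exact Submodule.smul_mem _ _ (Submodule.mem_span_singleton_self e)

end IsHeisenbergBracket

open Module.End

section Eigen

variable {n : ℕ} {br : HV n →ₗ[ℝ] HV n →ₗ[ℝ] HV n} {A : HV n →ₗ[ℝ] HV n}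

theorem eq_of_mem_eigenspace_of_ne_zero {a b : ℝ} {w : HV n} (ha : w ∈ eigenspace A a)
    (hb : w ∈ eigenspace A b) (hw : w ≠ 0) : a = b := by
  by_contra hab
  exact hw ((Submodule.disjoint_def.mp ((eigenspaces_iSupIndep A).pairwiseDisjoint hab)) w ha hb)

theorem exists_eq_of_iSup_eigenspace_eq_top {k : ℕ} {α : Fin (k + 1) → ℝ}
    (hspan : ⨆ i, eigenspace A (α i) = ⊤) {μ : ℝ} {v : HV n} (hv : v ∈ eigenspace A μ)
    (hv0 : v ≠ 0) : ∃ i, α i = μ := by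
  by_contra h
  have hdisj := (eigenspaces_iSupIndep A).disjoint_biSup (y := Set.range α) (x := μ)
    (by simpa using h)
  rw [iSup_range, hspan, disjoint_top] at hdisj
  exact hv0 (by simpa [hdisj] using hv)

theorem IsDerivation.exists_span_le_eigenspace (hA : IsDerivation br A) {e : HV n}
    (hbre : br e = 0) (hker : LinearMap.ker br ≤ ℝ ∙ e) : ∃ μ, ℝ ∙ e ≤ eigenspace A μ := by
  have hAe : br (A e) = 0 := LinearMap.ext fun y => by
    simpa [hbre] using (hA e y).symm
  obtain ⟨μ, hμ⟩ := Submodule.mem_span_singleton.mp (hker (LinearMap.mem_ker.mpr hAe))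
  exact ⟨μ, (Submodule.span_singleton_le_iff_mem _ _).mpr (mem_eigenspace_iff.mpr hμ.symm)⟩

theorem IsDerivation.bracket_mem_eigenspace_add (hA : IsDerivation br A) {a b : ℝ} {u v : HV n}
    (hu : u ∈ eigenspace A a) (hv : v ∈ eigenspace A b) : br u v ∈ eigenspace A (a + b) := by
  rw [mem_eigenspace_iff] at hu hv ⊢
  rw [hA, hu, hv, map_smul, LinearMap.smul_apply, map_smul, add_smul]

theorem IsDerivation.add_eq_of_bracket_ne_zero (hA : IsDerivation br A) {μ : ℝ}
    (hrange : ∀ x y, br x y ∈ eigenspace A μ) {a b : ℝ} {u v : HV n} (hu : u ∈ eigenspace A a)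
    (hv : v ∈ eigenspace A b) (huv : br u v ≠ 0) : a + b = μ :=
  eq_of_mem_eigenspace_of_ne_zero (hA.bracket_mem_eigenspace_add hu hv) (hrange u v) huv

theorem IsDerivation.exists_add_eq {k : ℕ} {α : Fin (k + 1) → ℝ} (hA : IsDerivation br A)
    {μ : ℝ} (hrange : ∀ x y, br x y ∈ eigenspace A μ) (hker : LinearMap.ker br ≤ eigenspace A μ)
    (hspan : ⨆ i, eigenspace A (α i) = ⊤) {a : ℝ} (ha : eigenspace A a ≠ ⊥) (haμ : a ≠ μ) :
    ∃ i, a + α i = μ := by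
  obtain ⟨u, hu, hu0⟩ := Submodule.exists_mem_ne_zero_of_ne_bot ha
  have hbu : br u ≠ 0 := fun h =>
    haμ (eq_of_mem_eigenspace_of_ne_zero hu (hker (LinearMap.mem_ker.mpr h)) hu0)
  by_contra! h
  refine hbu (LinearMap.ext fun v => ?_)
  have hle : ⨆ i, eigenspace A (α i) ≤ LinearMap.ker (br u) := iSup_le fun i v hv =>
    LinearMap.mem_ker.mpr (by_contra fun hne => h i (hA.add_eq_of_bracket_ne_zero hrange hu hv hne))
  exact LinearMap.mem_ker.mp (hle (hspan ▸ Submodule.mem_top))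

end Eigen

section Spectrum

variable {n k : ℕ} {br : HV n →ₗ[ℝ] HV n →ₗ[ℝ] HV n} {A : HV n →ₗ[ℝ] HV n}
  {α : Fin (k + 1) → ℝ} {μ : ℝ}

theorem IsDerivation.eq_last_of_mem_eigenspace (hA : IsDerivation br A) (hαmono : StrictMono α)
    (hαpos : ∀ i, 0 < α i) (hspan : ⨆ i, eigenspace A (α i) = ⊤)
    (hlast : eigenspace A (α (Fin.last k)) ≠ ⊥) (hrange : ∀ x y, br x y ∈ eigenspace A μ)
    (hker : LinearMap.ker br ≤ eigenspace A μ) {e : HV n} (he : e ∈ eigenspace A μ)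
    (he0 : e ≠ 0) : μ = α (Fin.last k) := by
  obtain ⟨i, rfl⟩ := exists_eq_of_iSup_eigenspace_eq_top hspan he he0
  by_contra hne
  obtain ⟨j, hj⟩ := hA.exists_add_eq hrange hker hspan hlast (Ne.symm hne)
  have := hαmono.monotone (Fin.le_last i)
  have := hαpos j
  linarith

theorem IsDerivation.bracket_eq_zero_of_lt (hA : IsDerivation br A) (hαmono : StrictMono α)
    (hspan : ⨆ i, eigenspace A (α i) = ⊤) (hrange : ∀ x y, br x y ∈ eigenspace A (α (Fin.last k)))
    (hker : LinearMap.ker br ≤ eigenspace A (α (Fin.last k))) {i p : Fin (k + 1)} (hip : i < p)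
    (hp : p < Fin.last k) (hUp : eigenspace A (α p) ≠ ⊥) {u v : HV n}
    (hu : u ∈ eigenspace A (α i)) (hv : v ∈ eigenspace A (α 0)) : br u v = 0 := by
  by_contra huv
  have hi0 := hA.add_eq_of_bracket_ne_zero hrange hu hv huv
  obtain ⟨j, hj⟩ := hA.exists_add_eq hrange hker hspan hUp (hαmono.injective.ne hp.ne)
  have := hαmono hip
  have := hαmono.monotone (Fin.zero_le j)
  linarith

end Spectrum

-- The paper's `K = U_2 ⊕ ⋯ ⊕ U_{k-1} ⊕ 𝓩(𝓗_n)`, with `U` indexed from `0` and `ker br` the centre.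
def middleSpan {n : ℕ} (k : ℕ) (U : Fin (k + 1) → Submodule ℝ (HV n))
    (br : HV n →ₗ[ℝ] HV n →ₗ[ℝ] HV n) : Submodule ℝ (HV n) :=
  (⨆ i : Fin (k + 1), if 1 ≤ (i : ℕ) ∧ (i : ℕ) + 1 < k then U i else ⊥) ⊔ LinearMap.ker br

theorem middleSpan_le {n k : ℕ} {U : Fin (k + 1) → Submodule ℝ (HV n)}
    {br : HV n →ₗ[ℝ] HV n →ₗ[ℝ] HV n} {S : Submodule ℝ (HV n)}
    (hU : ∀ i : Fin (k + 1), 1 ≤ (i : ℕ) → (i : ℕ) + 1 < k → U i ≤ S)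
    (hker : LinearMap.ker br ≤ S) : middleSpan k U br ≤ S :=
  sup_le (iSup_le fun i => by split_ifs with hi; exacts [hU i hi.1 hi.2, bot_le]) hker

section Distance

variable {n k : ℕ} {U : Fin (k + 1) → Submodule ℝ (HV n)}

theorem le_orthogonal_of_inner_eq_zero
    (hUorth : ∀ i j, i ≠ j → ∀ x ∈ U i, ∀ y ∈ U j, (inner ℝ x y : ℝ) = 0) {i j : Fin (k + 1)}
    (hij : i ≠ j) : U j ≤ (U i)ᗮ := fun y hy =>
  (Submodule.mem_orthogonal _ _).mpr fun x hx => hUorth i j hij x hx y hy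

theorem normA_add_of_mem_orthogonal {α : Fin (k + 1) → ℝ}
    (hUorth : ∀ i j, i ≠ j → ∀ x ∈ U i, ∀ y ∈ U j, (inner ℝ x y : ℝ) = 0) {i : Fin (k + 1)}
    (hα : α i ≠ 0) {w u : HV n} (hw : w ∈ (U i)ᗮ) (hu : u ∈ U i) :
    normA α U (w + u) = normA α U w + ‖u‖ ^ (α i)⁻¹ := by
  have hterm : ∀ j, ‖((U j).orthogonalProjectionOnto (w + u) : HV n)‖ ^ (α j)⁻¹ =
      ‖((U j).orthogonalProjectionOnto w : HV n)‖ ^ (α j)⁻¹ +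
        if i = j then ‖u‖ ^ (α i)⁻¹ else 0 := fun j => by
    rw [map_add, Submodule.coe_add]
    split_ifs with hij
    · subst hij
      have hself : ((U i).orthogonalProjectionOnto u : HV n) = u :=
        Submodule.starProjection_eq_self_iff.mpr hu
      rw [Submodule.orthogonalProjectionOnto_apply_of_mem_orthogonal hw, hself]
      simp [Real.zero_rpow (inv_ne_zero hα)]
    · rw [Submodule.orthogonalProjectionOnto_apply_of_mem_orthogonal
        (le_orthogonal_of_inner_eq_zero hUorth (Ne.symm hij) hu)]
      simp
  simp only [normA, hterm, Finset.sum_add_distrib, Finset.sum_ite_eq, Finset.mem_univ, if_true]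

end Distance

theorem IsHeisenbergBracket.bracket_mem_and_ker_le_eigenspace_last {n k : ℕ}
    {br : HV n →ₗ[ℝ] HV n →ₗ[ℝ] HV n} {A : HV n →ₗ[ℝ] HV n} {α : Fin (k + 1) → ℝ}
    (hbr : IsHeisenbergBracket n br) (hA : IsDerivation br A) (hαmono : StrictMono α)
    (hαpos : ∀ i, 0 < α i) (hspan : ⨆ i, eigenspace A (α i) = ⊤)
    (hlast : eigenspace A (α (Fin.last k)) ≠ ⊥) :
    (∀ x y, br x y ∈ eigenspace A (α (Fin.last k))) ∧
      LinearMap.ker br ≤ eigenspace A (α (Fin.last k)) := by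
  obtain ⟨e, he0, hbre, hrange, hker⟩ := hbr.exists_center
  obtain ⟨μ, hμ⟩ := hA.exists_span_le_eigenspace hbre hker
  have hrange' : ∀ x y, br x y ∈ eigenspace A μ := fun x y => hμ (hrange x y)
  obtain rfl := hA.eq_last_of_mem_eigenspace hαmono hαpos hspan hlast hrange' (hker.trans hμ)
    (hμ (Submodule.mem_span_singleton_self e)) he0
  exact ⟨hrange', hker.trans hμ⟩

section Coset

variable {n k : ℕ} {br : HV n →ₗ[ℝ] HV n →ₗ[ℝ] HV n} {U : Fin (k + 1) → Submodule ℝ (HV n)}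

theorem middleSpan_le_orthogonal
    (hUorth : ∀ i j, i ≠ j → ∀ x ∈ U i, ∀ y ∈ U j, (inner ℝ x y : ℝ) = 0)
    (hker : LinearMap.ker br ≤ (U 0)ᗮ) : middleSpan k U br ≤ (U 0)ᗮ :=
  middleSpan_le (fun i hi _ => le_orthogonal_of_inner_eq_zero hUorth
    (fun h => by rw [← h] at hi; exact absurd hi (by simp))) hker

theorem hMul_mem {S : Submodule ℝ (HV n)} (hbr : ∀ x y, br x y ∈ S) {x y : HV n} (hx : x ∈ S)
    (hy : y ∈ S) : hMul br x y ∈ S :=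
  add_mem (add_mem hx hy) (S.smul_mem _ (hbr x y))

theorem hMul_neg_hMul_hMul {g g' s t : HV n} (hgs : br g s = 0) (hgt : br g t = 0)
    (hsg' : br s g' = 0) (hg't : br g' t = 0) (hst : br s t = 0) :
    hMul br (-hMul br g s) (hMul br g' t) = hMul br (-g) g' + (t - s) := by
  simp only [hMul, hgs, hg't, smul_zero, add_zero, map_add, map_neg, LinearMap.add_apply,
    LinearMap.neg_apply, hgt, hsg', hst]
  module

theorem qd_hMul_hMul {α : Fin (k + 1) → ℝ}
    (hUorth : ∀ i j, i ≠ j → ∀ x ∈ U i, ∀ y ∈ U j, (inner ℝ x y : ℝ) = 0)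
    (hanti : ∀ x y, br x y = -br y x) {i : Fin (k + 1)} (hα : α i ≠ 0)
    (hUi : ∀ s ∈ U i, ∀ t ∈ U i, br s t = 0) {g g' : HV n} (hg : ∀ v ∈ U i, br g v = 0)
    (hg' : ∀ v ∈ U i, br g' v = 0) (hgg' : hMul br (-g) g' ∈ (U i)ᗮ) {s t : HV n}
    (hs : s ∈ U i) (ht : t ∈ U i) :
    qd br α U (hMul br g s) (hMul br g' t) = qd br α U g g' + ‖t - s‖ ^ (α i)⁻¹ := by
  rw [qd, hMul_neg_hMul_hMul (hg s hs) (hg t ht) (by rw [hanti, hg' s hs, neg_zero]) (hg' t ht)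
    (hUi s hs t ht)]
  exact normA_add_of_mem_orthogonal hUorth hα hgg' (sub_mem ht hs)

end Coset

theorem isGLB_of_eq_add_norm_rpow {E : Type*} [NormedAddCommGroup E] [Module ℝ E]
    {S : Submodule ℝ E} {D : E → E → ℝ} {c p : ℝ} (hp : p ≠ 0)
    (hD : ∀ s ∈ S, ∀ t ∈ S, D s t = c + ‖t - s‖ ^ p) {x : E} (hx : x ∈ S) :
    IsGLB {d | ∃ s ∈ S, ∃ t ∈ S, d = D s t} c ∧ IsGLB {d | ∃ t ∈ S, d = D x t} c := by
  have hle : ∀ s ∈ S, ∀ t ∈ S, c ≤ D s t := fun s hs t ht => by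
    rw [hD s hs t ht]
    exact le_add_of_nonneg_right (by positivity)
  have hdiag : ∀ s ∈ S, D s s = c := fun s hs => by
    rw [hD s hs s hs, sub_self, norm_zero, Real.zero_rpow hp, add_zero]
  refine ⟨IsLeast.isGLB ⟨⟨0, S.zero_mem, 0, S.zero_mem, (hdiag 0 S.zero_mem).symm⟩, ?_⟩,
    IsLeast.isGLB ⟨⟨x, hx, (hdiag x hx).symm⟩, ?_⟩⟩
  · rintro _ ⟨s, hs, t, ht, rfl⟩
    exact hle s hs t ht
  · rintro _ ⟨t, ht, rfl⟩
    exact hle x hx t ht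

theorem stmt16_general
    (n k : ℕ)
    (br : HV n →ₗ[ℝ] HV n →ₗ[ℝ] HV n) (hbr : IsHeisenbergBracket n br)
    (A : HV n →ₗ[ℝ] HV n) (hA : IsDerivation br A)
    (α : Fin (k + 1) → ℝ) (hαmono : StrictMono α) (hαpos : ∀ i, 0 < α i)
    (U : Fin (k + 1) → Submodule ℝ (HV n))
    (hU : ∀ i, U i = Module.End.eigenspace A (α i))
    (hUne : ∀ i, U i ≠ ⊥) (hUspan : (⨆ i, U i) = ⊤)
    (hUorth : ∀ i j, i ≠ j → ∀ x ∈ U i, ∀ y ∈ U j, (inner ℝ x y : ℝ) = 0)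
    (hk2 : 2 ≤ k)
    (g g' : HV n)
    (hg : g ∈ ((⨆ i : Fin (k + 1), if 1 ≤ (i : ℕ) ∧ (i : ℕ) + 1 < k then U i else ⊥) ⊔
      LinearMap.ker br : Submodule ℝ (HV n)))
    (hg' : g' ∈ ((⨆ i : Fin (k + 1), if 1 ≤ (i : ℕ) ∧ (i : ℕ) + 1 < k then U i else ⊥) ⊔
      LinearMap.ker br : Submodule ℝ (HV n)))
    (x : HV n) (hx : x ∈ U 0) :
    IsGLB {d : ℝ | ∃ s ∈ U 0, ∃ t ∈ U 0, d = qd br α U (hMul br g s) (hMul br g' t)}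
      (qd br α U g g') ∧
    IsGLB {d : ℝ | ∃ t ∈ U 0, d = qd br α U (hMul br g x) (hMul br g' t)}
      (qd br α U g g') := by
  obtain rfl : U = fun i => eigenspace A (α i) := funext hU
  obtain ⟨hrange, hker⟩ :=
    hbr.bracket_mem_and_ker_le_eigenspace_last hA hαmono hαpos hUspan (hUne _)
  have hU0 : ∀ i : Fin (k + 1), (i : ℕ) + 2 ≤ k →
      ∀ u ∈ eigenspace A (α i), ∀ v ∈ eigenspace A (α 0), br u v = 0 := fun i hi u hu v hv =>
    hA.bracket_eq_zero_of_lt hαmono hUspan hrange hker (p := ⟨k - 1, by omega⟩)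
      (Fin.lt_def.mpr (by simp; omega)) (Fin.lt_def.mpr (by simp; omega)) (hUne _) hu hv
  have hK : ∀ w ∈ middleSpan k _ br, ∀ v ∈ eigenspace A (α 0), br w v = 0 := fun w hw v hv =>
    middleSpan_le (S := LinearMap.ker (br.flip v)) (fun i _ hi u hu => hU0 i (by omega) u hu v hv)
      (fun z hz => by simp [LinearMap.mem_ker.mp hz]) hw
  have hlast : eigenspace A (α (Fin.last k)) ≤ (eigenspace A (α 0))ᗮ :=
    le_orthogonal_of_inner_eq_zero hUorth (by simp [Fin.ext_iff]; omega)
  have hKorth := middleSpan_le_orthogonal hUorth (hker.trans hlast)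
  have hgg' := hMul_mem (fun x y => hlast (hrange x y)) (neg_mem (hKorth hg)) (hKorth hg')
  exact isGLB_of_eq_add_norm_rpow (inv_ne_zero (hαpos 0).ne') (fun s hs t ht =>
    qd_hMul_hMul hUorth hbr.antisymm (hαpos 0).ne'
      (hU0 0 hk2) (hK g hg) (hK g' hg') hgg' hs ht) hx

theorem stmt16
    (n k : ℕ) (hn : 1 ≤ n) (hk : 1 ≤ k)
    (br : HV n →ₗ[ℝ] HV n →ₗ[ℝ] HV n) (hbr : IsHeisenbergBracket n br)
    (A : HV n →ₗ[ℝ] HV n) (hA : IsDerivation br A)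
    (α : Fin (k + 1) → ℝ) (hαmono : StrictMono α) (hαpos : ∀ i, 0 < α i)
    (U : Fin (k + 1) → Submodule ℝ (HV n))
    (hU : ∀ i, U i = Module.End.eigenspace A (α i))
    (hUne : ∀ i, U i ≠ ⊥) (hUspan : (⨆ i, U i) = ⊤)
    (hUorth : ∀ i j, i ≠ j → ∀ x ∈ U i, ∀ y ∈ U j, (inner ℝ x y : ℝ) = 0)
    (hbrnorm : ∀ x y : HV n, ‖br x y‖ ≤ ‖x‖ * ‖y‖)
    (hk2 : 2 ≤ k)
    (g g' : HV n)
    (hg : g ∈ ((⨆ i : Fin (k + 1), if 1 ≤ (i : ℕ) ∧ (i : ℕ) + 1 < k then U i else ⊥) ⊔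
      LinearMap.ker br : Submodule ℝ (HV n)))
    (hg' : g' ∈ ((⨆ i : Fin (k + 1), if 1 ≤ (i : ℕ) ∧ (i : ℕ) + 1 < k then U i else ⊥) ⊔
      LinearMap.ker br : Submodule ℝ (HV n)))
    (x : HV n) (hx : x ∈ U 0) :
    IsGLB {d : ℝ | ∃ s ∈ U 0, ∃ t ∈ U 0, d = qd br α U (hMul br g s) (hMul br g' t)}
      (qd br α U g g') ∧
    IsGLB {d : ℝ | ∃ t ∈ U 0, d = qd br α U (hMul br g x) (hMul br g' t)}
      (qd br α U g g') :=
  stmt16_general n k br hbr A hA α hαmono hαpos U hU hUne hUspan hUorth hk2 g g' hg hg' x hx
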